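/- If σ_r − σ_{r+1} > 2‖(I − U_r U_rᵀ) y_n‖, then for any choice of leading-r orthonormal left singular vectors Û_r of Ŷ, ‖Û_r Û_rᵀ − U_r U_rᵀ‖_F ≤ 2‖(I − U_r U_rᵀ) y_n‖ / (σ_r − σ_{r+1}). -/

import Mathlib

open Matrix MeasureTheory ProbabilityTheory
open scoped BigOperators ENNReal NNReal

noncomputable section

/-- Euclidean norm of a vector in `Fin p → ℝ`. -/
def vnorm {p : ℕ} (x : Fin p → ℝ) : ℝ := Real.sqrt (∑ i, (x i) ^ 2)

/-- Frobenius norm of a real matrix. -/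
def fnorm {m n : ℕ} (A : Matrix (Fin m) (Fin n) ℝ) : ℝ :=
  Real.sqrt (∑ i, ∑ j, (A i j) ^ 2)

/-- Operator (spectral) norm of a real matrix. -/
def opnorm {m n : ℕ} (A : Matrix (Fin m) (Fin n) ℝ) : ℝ :=
  ‖LinearMap.toContinuousLinearMap (Matrix.toEuclideanLin A)‖

/-- A (full) singular value decomposition of a real `p × n` matrix `A`:
`A = U D Vᵀ` with `U, V` orthogonal and `D` the rectangular diagonal matrix with the
nonincreasing nonnegative singular values `sv 0 ≥ sv 1 ≥ ⋯` on the diagonal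
(0-indexed, so the math `σ_i` is `sv (i-1)`), extended by zero beyond `min p n`. -/
structure SVDData (p n : ℕ) (A : Matrix (Fin p) (Fin n) ℝ) where
  U : Matrix (Fin p) (Fin p) ℝ
  V : Matrix (Fin n) (Fin n) ℝ
  sv : ℕ → ℝ
  hU : Uᵀ * U = 1
  hV : Vᵀ * V = 1
  sv_anti : ∀ i j : ℕ, i ≤ j → sv j ≤ sv i
  sv_nonneg : ∀ i, 0 ≤ sv i
  sv_zero : ∀ j, min p n ≤ j → sv j = 0
  decomp : A = U * (Matrix.of fun (i : Fin p) (j : Fin n) => if (i : ℕ) = (j : ℕ) then sv (i : ℕ) else 0) * Vᵀ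

/-- Projection matrix `U_{1:r} U_{1:r}ᵀ` onto the span of the first `r` columns of `U`. -/
def projr {p : ℕ} (U : Matrix (Fin p) (Fin p) ℝ) (r : ℕ) : Matrix (Fin p) (Fin p) ℝ :=
  Matrix.of fun i j => ∑ l : Fin p, if (l : ℕ) < r then U i l * U j l else 0

/-- The `l`-th (0-indexed) column of a matrix, as a vector. -/
def matCol {p q : ℕ} (U : Matrix (Fin p) (Fin q) ℝ) (l : ℕ) : Fin p → ℝ :=
  fun i => if h : l < q then U i ⟨l, h⟩ else 0

/-- `β` for a cluster assignment: `(k/n) ·` (size of the smallest cluster),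
so that `β·n/k` is the size of the smallest cluster. -/
def betaMin (n k : ℕ) (z : Fin n → Fin k) : ℝ :=
  ((k : ℝ) / n) * ⨅ a : Fin k, ((Finset.univ.filter fun i => z i = a).card : ℝ)

/-- Minimum pairwise distance between the centers. -/
def Delta {p k : ℕ} (θ : Fin k → Fin p → ℝ) : ℝ :=
  ⨅ q : {q : Fin k × Fin k // q.1 ≠ q.2}, vnorm (fun i => θ q.1.1 i - θ q.1.2 i)

/-- Misclustering error `ℓ(z, z*)`. -/
def miscl {n k : ℕ} (z zs : Fin n → Fin k) : ℝ :=
  (⨅ φ : Equiv.Perm (Fin k), ((Finset.univ.filter fun i => z i ≠ φ (zs i)).card : ℝ)) / n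

/-- `(z, c)` is a global minimizer of the k-means objective for the columns of `W * X`. -/
def IsKMeans {p n k : ℕ} (W : Matrix (Fin p) (Fin p) ℝ) (X : Matrix (Fin p) (Fin n) ℝ)
    (z : Fin n → Fin k) (c : Fin k → Fin p → ℝ) : Prop :=
  ∀ (z' : Fin n → Fin k) (c' : Fin k → Fin p → ℝ),
    ∑ i, ∑ a, (W.mulVec (fun b => X b i) a - c (z i) a) ^ 2 ≤
      ∑ i, ∑ a, (W.mulVec (fun b => X b i) a - c' (z' i) a) ^ 2

/-!
Write `P = U_r U_rᵀ`, `Q = I − P`, `w = Q y_n` and `Ŷ Ŷᵀ = Y Yᵀ + y_n y_nᵀ`. Since `P` commutes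
with `Y Yᵀ`, applying `Q` to `Ŷ Ŷᵀ û_l = σ̂_l² û_l` gives `Y Yᵀ a + (y_nᵀ û_l) w = σ̂_l² a` for
`a = Q û_l`, while the Rayleigh quotient of `Y Yᵀ` on the range of `Q` is at most `σ_{r+1}²`.
Appending a column does not decrease singular values (Courant–Fischer), so `σ̂_l ≥ σ_r` for `l ≤ r`;
with `y_nᵀ û_l = σ̂_l v̂_l(n)` this yields `(σ_r − σ_{r+1}) ‖Q û_l‖ ≤ ‖w‖ |v̂_l(n)|`. Summing over
`l ≤ r`, using `∑_l v̂_l(n)² ≤ 1` and `‖P̂ − P‖_F² = 2 tr(Q P̂) = 2 ∑_{l ≤ r} ‖Q û_l‖²`, gives the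
bound even with `√2` in place of `2`.
-/

namespace Matrix

variable {p : ℕ}

theorem dotProduct_self_nonneg (v : Fin p → ℝ) : 0 ≤ v ⬝ᵥ v :=
  Finset.sum_nonneg fun i _ => mul_self_nonneg (v i)

theorem dotProduct_sq_le (v w : Fin p → ℝ) : (v ⬝ᵥ w) ^ 2 ≤ (v ⬝ᵥ v) * (w ⬝ᵥ w) := by
  simpa [dotProduct, sq] using Finset.sum_mul_sq_le_sq_mul_sq Finset.univ v w

theorem dotProduct_transpose_mulVec_self {U : Matrix (Fin p) (Fin p) ℝ} (hU : U * Uᵀ = 1)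
    (x : Fin p → ℝ) : (Uᵀ *ᵥ x) ⬝ᵥ (Uᵀ *ᵥ x) = x ⬝ᵥ x := by
  rw [dotProduct_mulVec, ← mulVec_transpose, transpose_transpose, mulVec_mulVec, hU, one_mulVec]

theorem sum_sq_eq_trace_mul_transpose {m n : ℕ} (M : Matrix (Fin m) (Fin n) ℝ) :
    ∑ i, ∑ j, M i j ^ 2 = (M * Mᵀ).trace := by
  simp [trace, mul_apply, sq]

theorem exists_ne_zero_transpose_mulVec_eq_zero (U W : Matrix (Fin p) (Fin p) ℝ) {k : ℕ}
    (hk : k < p) :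
    ∃ x ≠ 0, (∀ l : Fin p, k < (l : ℕ) → (Uᵀ *ᵥ x) l = 0) ∧
      (∀ l : Fin p, (l : ℕ) < k → (Wᵀ *ᵥ x) l = 0) := by
  let M : Matrix (Fin p) (Fin p) ℝ :=
    Matrix.of fun l => if k < (l : ℕ) then Uᵀ l else if (l : ℕ) < k then Wᵀ l else 0
  have hM : M.det = 0 := det_eq_zero_of_row_eq_zero ⟨k, hk⟩ fun j => by simp [M]
  obtain ⟨x, hx0, hMx⟩ := exists_mulVec_eq_zero_iff.mpr hM
  refine ⟨x, hx0, fun l hl => ?_, fun l hl => ?_⟩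
  · simpa [M, mulVec, hl] using congrFun hMx l
  · simpa [M, mulVec, hl, hl.not_gt] using congrFun hMx l

theorem dotProduct_mulVec_le_add_vecMulVec (M : Matrix (Fin p) (Fin p) ℝ) (y x : Fin p → ℝ) :
    x ⬝ᵥ M *ᵥ x ≤ x ⬝ᵥ (M + vecMulVec y y) *ᵥ x := by
  rw [add_mulVec, dotProduct_add, vecMulVec_mulVec, op_smul_eq_smul, dotProduct_smul,
    smul_eq_mul, dotProduct_comm x y]
  exact le_add_of_nonneg_right (mul_self_nonneg _)

theorem mul_transpose_eq_add_vecMulVec {n : ℕ} {Yhat : Matrix (Fin p) (Fin (n + 1)) ℝ}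
    {Y : Matrix (Fin p) (Fin n) ℝ} {y : Fin p → ℝ}
    (hY : ∀ i j, Y i j = Yhat i (Fin.castSucc j)) (hy : ∀ i, y i = Yhat i (Fin.last n)) :
    Yhat * Yhatᵀ = Y * Yᵀ + vecMulVec y y := by
  ext i j
  simp [mul_apply, Fin.sum_univ_castSucc, hY, hy, vecMulVec_apply]

end Matrix

theorem sum_sq_matCol_le_one {q : ℕ} {V : Matrix (Fin q) (Fin q) ℝ} (hV : Vᵀ * V = 1) (p : ℕ)
    (j : Fin q) : ∑ l : Fin p, matCol V l j ^ 2 ≤ 1 := by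
  have hrow : ∑ k : Fin q, matCol V k j ^ 2 = 1 := by
    have := congrFun (congrFun (mul_eq_one_comm.mp hV : V * Vᵀ = 1) j) j
    simpa [matCol, mul_apply, sq] using this
  rw [← hrow, Fin.sum_univ_eq_sum_range (fun l => matCol V l j ^ 2),
    Fin.sum_univ_eq_sum_range (fun l => matCol V l j ^ 2)]
  calc ∑ l ∈ Finset.range p, matCol V l j ^ 2
      ≤ ∑ l ∈ Finset.range (max p q), matCol V l j ^ 2 :=
        Finset.sum_le_sum_of_subset_of_nonneg (by simp) fun _ _ _ => sq_nonneg _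
    _ = ∑ l ∈ Finset.range q, matCol V l j ^ 2 := by
        refine (Finset.sum_subset (by simp) fun l _ hl => ?_).symm
        simp_all [matCol]

def coordProj (p r : ℕ) : Matrix (Fin p) (Fin p) ℝ :=
  diagonal fun l => if (l : ℕ) < r then 1 else 0

theorem coordProj_mul_self (p r : ℕ) : coordProj p r * coordProj p r = coordProj p r := by
  simp only [coordProj, diagonal_mul_diagonal]
  congr 1
  ext l
  split_ifs <;> simp

section Projection

variable {p : ℕ} {U : Matrix (Fin p) (Fin p) ℝ}

theorem projr_eq_mul (U : Matrix (Fin p) (Fin p) ℝ) (r : ℕ) :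
    projr U r = U * coordProj p r * Uᵀ := by
  ext i j
  simp only [projr, coordProj, of_apply, mul_apply, diagonal_apply, transpose_apply]
  refine Finset.sum_congr rfl fun l _ => ?_
  rw [Finset.sum_eq_single l] <;> simp +contextual [eq_comm]

theorem projr_transpose (U : Matrix (Fin p) (Fin p) ℝ) (r : ℕ) : (projr U r)ᵀ = projr U r := by
  simp [projr_eq_mul, coordProj, Matrix.mul_assoc]

theorem isIdempotentElem_projr (hU : Uᵀ * U = 1) (r : ℕ) : IsIdempotentElem (projr U r) := by
  rw [IsIdempotentElem, projr_eq_mul]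
  calc U * coordProj p r * Uᵀ * (U * coordProj p r * Uᵀ)
      = U * (coordProj p r * (Uᵀ * U) * coordProj p r) * Uᵀ := by simp only [Matrix.mul_assoc]
    _ = U * coordProj p r * Uᵀ := by rw [hU, Matrix.mul_one, coordProj_mul_self, Matrix.mul_assoc]

theorem trace_projr (hU : Uᵀ * U = 1) (r : ℕ) : (projr U r).trace = (coordProj p r).trace := by
  rw [projr_eq_mul, trace_mul_comm, ← Matrix.mul_assoc, hU, Matrix.one_mul]

theorem transpose_mulVec_one_sub_projr_of_lt (hU : Uᵀ * U = 1) {r : ℕ} (x : Fin p → ℝ)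
    {l : Fin p} (hl : (l : ℕ) < r) : (Uᵀ *ᵥ ((1 - projr U r) *ᵥ x)) l = 0 := by
  have : Uᵀ * (1 - projr U r) = (1 - coordProj p r) * Uᵀ := by
    rw [projr_eq_mul, Matrix.mul_sub, Matrix.sub_mul, ← Matrix.mul_assoc, ← Matrix.mul_assoc, hU,
      Matrix.one_mul, Matrix.mul_one, Matrix.one_mul]
  rw [mulVec_mulVec, this, Matrix.sub_mul, Matrix.one_mul, sub_mulVec, ← mulVec_mulVec, coordProj,
    Pi.sub_apply, mulVec_diagonal, if_pos hl, one_mul, sub_self]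

theorem sum_sq_sub_eq_two_trace {P P' : Matrix (Fin p) (Fin p) ℝ} (hP : Pᵀ = P) (hP' : P'ᵀ = P')
    (hPi : IsIdempotentElem P) (hPi' : IsIdempotentElem P') (htr : P.trace = P'.trace) :
    ∑ i, ∑ j, (P' - P) i j ^ 2 = 2 * ((1 - P) * P').trace := by
  have hexp : (P' - P) * (P' - P) = P' - P' * P - P * P' + P := by
    rw [Matrix.sub_mul, Matrix.mul_sub, Matrix.mul_sub, hPi'.eq, hPi.eq]
    abel
  rw [sum_sq_eq_trace_mul_transpose, transpose_sub, hP, hP', hexp, Matrix.sub_mul,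
    Matrix.one_mul]
  simp only [trace_add, trace_sub, trace_mul_comm P' P]
  linarith

theorem trace_mul_projr {Q : Matrix (Fin p) (Fin p) ℝ} (hQ : Qᵀ = Q) (hQi : IsIdempotentElem Q)
    (U : Matrix (Fin p) (Fin p) ℝ) (r : ℕ) :
    (Q * projr U r).trace =
      ∑ l : Fin p, (if (l : ℕ) < r then 1 else 0) * ((Q *ᵥ U.col l) ⬝ᵥ (Q *ᵥ U.col l)) := by
  rw [projr_eq_mul, ← Matrix.mul_assoc, trace_mul_comm, ← Matrix.mul_assoc, ← Matrix.mul_assoc]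
  simp only [trace, diag_apply, coordProj, mul_diagonal, mul_mul_apply]
  refine Finset.sum_congr rfl fun l _ => ?_
  rw [mul_comm, dotProduct_mulVec (Q *ᵥ _), ← mulVec_transpose, mulVec_mulVec, hQ, hQi.eq,
    dotProduct_comm]
  rfl

end Projection

namespace SVDData

variable {p n : ℕ} {A : Matrix (Fin p) (Fin n) ℝ} (D : SVDData p n A)

def sigmaMatrix : Matrix (Fin p) (Fin n) ℝ :=
  Matrix.of fun i j => if (i : ℕ) = (j : ℕ) then D.sv i else 0

theorem U_mul_transpose : D.U * D.Uᵀ = 1 := mul_eq_one_comm.mp D.hU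

theorem sigmaMatrix_mul_transpose :
    D.sigmaMatrix * D.sigmaMatrixᵀ = diagonal fun l : Fin p => D.sv l ^ 2 := by
  ext i j
  simp only [sigmaMatrix, mul_apply, transpose_apply, of_apply, diagonal_apply]
  by_cases hij : i = j
  · subst hij
    by_cases hi : (i : ℕ) < n
    · rw [Finset.sum_eq_single ⟨i, hi⟩] <;> simp +contextual [sq, Fin.ext_iff, eq_comm]
    · have : D.sv i = 0 := D.sv_zero _ (by omega)
      simp [this]
  · rw [if_neg hij]
    refine Finset.sum_eq_zero fun k _ => ?_
    have : (i : ℕ) ≠ j := fun h => hij (Fin.ext h)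
    split_ifs <;> simp_all

theorem mul_transpose_eq : A * Aᵀ = D.U * diagonal (fun l : Fin p => D.sv l ^ 2) * D.Uᵀ := by
  calc A * Aᵀ = D.U * D.sigmaMatrix * D.Vᵀ * (D.U * D.sigmaMatrix * D.Vᵀ)ᵀ :=
        congrArg (fun M => M * Mᵀ) D.decomp
    _ = D.U * (D.sigmaMatrix * (D.Vᵀ * D.V) * D.sigmaMatrixᵀ) * D.Uᵀ := by
      simp only [transpose_mul, transpose_transpose, Matrix.mul_assoc]
    _ = _ := by rw [D.hV, Matrix.mul_one, sigmaMatrix_mul_transpose]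

theorem transpose_mul_U_apply (j : Fin n) (l : Fin p) :
    (Aᵀ * D.U) j l = D.sv l * matCol D.V l j := by
  have : Aᵀ * D.U = D.V * D.sigmaMatrixᵀ := by
    calc Aᵀ * D.U = (D.U * D.sigmaMatrix * D.Vᵀ)ᵀ * D.U := congrArg (fun M => Mᵀ * D.U) D.decomp
      _ = D.V * D.sigmaMatrixᵀ * (D.Uᵀ * D.U) := by
        simp only [transpose_mul, transpose_transpose, Matrix.mul_assoc]
      _ = _ := by rw [D.hU, Matrix.mul_one]
  rw [this, mul_apply]
  simp only [sigmaMatrix, transpose_apply, of_apply, matCol]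
  split_ifs with hl
  · rw [Finset.sum_eq_single (⟨l, hl⟩ : Fin n)] <;>
      simp +contextual [Fin.ext_iff, mul_comm, eq_comm]
  · rw [mul_zero]
    refine Finset.sum_eq_zero fun k _ => ?_
    have : (l : ℕ) ≠ k := by omega
    simp [this]

theorem mul_transpose_mulVec_col (l : Fin p) :
    (A * Aᵀ) *ᵥ D.U.col l = D.sv l ^ 2 • D.U.col l := by
  rw [D.mul_transpose_eq, ← mulVec_single_one, mulVec_mulVec, Matrix.mul_assoc,
    Matrix.mul_assoc, D.hU, Matrix.mul_one, ← mulVec_mulVec, diagonal_mulVec_single, mul_one,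
    ← mulVec_smul, ← Pi.single_smul, smul_eq_mul, mul_one]

theorem dotProduct_mul_transpose_mulVec (x : Fin p → ℝ) :
    x ⬝ᵥ (A * Aᵀ) *ᵥ x = ∑ l : Fin p, D.sv l ^ 2 * (D.Uᵀ *ᵥ x) l ^ 2 := by
  rw [D.mul_transpose_eq, ← mulVec_mulVec, ← mulVec_mulVec, dotProduct_mulVec,
    ← mulVec_transpose]
  simp only [dotProduct, mulVec_diagonal]
  exact Finset.sum_congr rfl fun l _ => by ring

theorem dotProduct_self_eq_sum_sq (x : Fin p → ℝ) : x ⬝ᵥ x = ∑ l : Fin p, (D.Uᵀ *ᵥ x) l ^ 2 := by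
  rw [← dotProduct_transpose_mulVec_self D.U_mul_transpose x, dotProduct]
  simp only [sq]

theorem sq_sv_anti {i j : ℕ} (h : i ≤ j) : D.sv j ^ 2 ≤ D.sv i ^ 2 :=
  pow_le_pow_left₀ (D.sv_nonneg j) (D.sv_anti i j h) 2

theorem dotProduct_mul_transpose_mulVec_le {k : ℕ} {x : Fin p → ℝ}
    (hx : ∀ l : Fin p, (l : ℕ) < k → (D.Uᵀ *ᵥ x) l = 0) :
    x ⬝ᵥ (A * Aᵀ) *ᵥ x ≤ D.sv k ^ 2 * (x ⬝ᵥ x) := by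
  rw [D.dotProduct_mul_transpose_mulVec, D.dotProduct_self_eq_sum_sq, Finset.mul_sum]
  refine Finset.sum_le_sum fun l _ => ?_
  by_cases hl : (l : ℕ) < k
  · simp [hx l hl]
  · exact mul_le_mul_of_nonneg_right (D.sq_sv_anti (by omega)) (sq_nonneg _)

theorem le_dotProduct_mul_transpose_mulVec {k : ℕ} {x : Fin p → ℝ}
    (hx : ∀ l : Fin p, k < (l : ℕ) → (D.Uᵀ *ᵥ x) l = 0) :
    D.sv k ^ 2 * (x ⬝ᵥ x) ≤ x ⬝ᵥ (A * Aᵀ) *ᵥ x := by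
  rw [D.dotProduct_mul_transpose_mulVec, D.dotProduct_self_eq_sum_sq, Finset.mul_sum]
  refine Finset.sum_le_sum fun l _ => ?_
  by_cases hl : k < (l : ℕ)
  · simp [hx l hl]
  · exact mul_le_mul_of_nonneg_right (D.sq_sv_anti (by omega)) (sq_nonneg _)

theorem sv_le_of_dotProduct_le {m : ℕ} {B : Matrix (Fin p) (Fin m) ℝ} (E : SVDData p m B)
    (h : ∀ x, x ⬝ᵥ (A * Aᵀ) *ᵥ x ≤ x ⬝ᵥ (B * Bᵀ) *ᵥ x) (k : ℕ) : D.sv k ≤ E.sv k := by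
  by_cases hk : k < p
  · obtain ⟨x, hx0, hxD, hxE⟩ := exists_ne_zero_transpose_mulVec_eq_zero D.U E.U hk
    have hxx : 0 < x ⬝ᵥ x :=
      lt_of_le_of_ne (dotProduct_self_nonneg x)
        (Ne.symm (dotProduct_self_eq_zero.not.mpr hx0))
    have hsq : D.sv k ^ 2 * (x ⬝ᵥ x) ≤ E.sv k ^ 2 * (x ⬝ᵥ x) :=
      (D.le_dotProduct_mul_transpose_mulVec hxD).trans
        ((h x).trans (E.dotProduct_mul_transpose_mulVec_le hxE))
    exact (pow_le_pow_iff_left₀ (D.sv_nonneg k) (E.sv_nonneg k) two_ne_zero).mp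
      (le_of_mul_le_mul_right hsq hxx)
  · rw [D.sv_zero k (by omega)]
    exact E.sv_nonneg k

theorem projr_commute (r : ℕ) : Commute (projr D.U r) (A * Aᵀ) := by
  rw [projr_eq_mul, D.mul_transpose_eq, Commute, SemiconjBy]
  simp only [Matrix.mul_assoc]
  rw [← Matrix.mul_assoc D.Uᵀ, ← Matrix.mul_assoc D.Uᵀ, D.hU, Matrix.one_mul, Matrix.one_mul,
    coordProj, ← Matrix.mul_assoc (diagonal _), ← Matrix.mul_assoc (diagonal _),
    diagonal_mul_diagonal, diagonal_mul_diagonal]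
  simp only [mul_comm]

end SVDData

-- The eigen-equation tested against `a = Q û` in scalar form: `a = ‖Q û‖²`, `g = ⟪Q û, Y Yᵀ Q û⟫`,
-- `c = ⟪Q û, w⟫`, `e = ‖w‖²`, `σ t = ⟪y, û⟫`.
theorem sq_gap_mul_le_of_eq {a g c s σ t δ e : ℝ} (hδ : 0 < δ) (hs : 0 ≤ s) (hσ : s + δ ≤ σ)
    (ha : 0 ≤ a) (he : 0 ≤ e) (hg : g ≤ s ^ 2 * a) (hc : c ^ 2 ≤ a * e)
    (h : g + σ * t * c = σ ^ 2 * a) :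
    δ ^ 2 * a ≤ e * t ^ 2 := by
  have hδa : δ * a ≤ t * c := by
    have hσ0 : 0 < σ := by linarith
    have : σ * (δ * a) ≤ σ * (t * c) := by
      nlinarith [mul_nonneg (mul_nonneg (sub_nonneg.2 hσ) (by linarith : 0 ≤ σ + s)) ha,
        mul_nonneg (mul_nonneg hδ.le hs) ha]
    exact le_of_mul_le_mul_left this hσ0
  have hsq : a * (δ ^ 2 * a) ≤ a * (e * t ^ 2) := by
    nlinarith [mul_nonneg hδ.le ha, sq_nonneg t]
  rcases ha.lt_or_eq with ha | ha
  · exact le_of_mul_le_mul_left hsq ha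
  · rw [← ha, mul_zero]
    positivity

namespace SVDData

variable {p n : ℕ} {A : Matrix (Fin p) (Fin n) ℝ} (D : SVDData p n A)

theorem sq_mul_dotProduct_le {y u : Fin p → ℝ} {σ t δ : ℝ} {r : ℕ}
    (hu : (A * Aᵀ + vecMulVec y y) *ᵥ u = σ ^ 2 • u) (hyu : y ⬝ᵥ u = σ * t)
    (hδ : 0 < δ) (hσ : D.sv r + δ ≤ σ) :
    δ ^ 2 * ((1 - projr D.U r) *ᵥ u ⬝ᵥ (1 - projr D.U r) *ᵥ u) ≤
      ((1 - projr D.U r) *ᵥ y ⬝ᵥ (1 - projr D.U r) *ᵥ y) * t ^ 2 := by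
  set Q := 1 - projr D.U r
  set a := Q *ᵥ u
  have hQ : Commute Q (A * Aᵀ) := (Commute.one_left _).sub_left (D.projr_commute r)
  have heq : (A * Aᵀ) *ᵥ a + (σ * t) • (Q *ᵥ y) = σ ^ 2 • a := by
    have := congrArg (Q *ᵥ ·) hu
    simp only [add_mulVec, vecMulVec_mulVec, op_smul_eq_smul, mulVec_add, mulVec_smul,
      mulVec_mulVec, hyu] at this
    rwa [hQ.eq, ← mulVec_mulVec] at this
  have hdot := congrArg (a ⬝ᵥ ·) heq
  simp only [dotProduct_add, dotProduct_smul, smul_eq_mul] at hdot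
  exact sq_gap_mul_le_of_eq hδ (D.sv_nonneg r) hσ (dotProduct_self_nonneg _)
    (dotProduct_self_nonneg _)
    (D.dotProduct_mul_transpose_mulVec_le fun _ hl =>
      transpose_mulVec_one_sub_projr_of_lt D.hU u hl)
    (dotProduct_sq_le a (Q *ᵥ y)) hdot

theorem sq_mul_trace_one_sub_projr_mul_le {m : ℕ} {B : Matrix (Fin p) (Fin m) ℝ}
    (E : SVDData p m B) {y : Fin p → ℝ} {j : Fin m} (hB : B * Bᵀ = A * Aᵀ + vecMulVec y y)
    (hy : ∀ i, y i = B i j) {r : ℕ} {δ : ℝ} (hδ : 0 < δ)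
    (hσ : ∀ l : Fin p, (l : ℕ) < r → D.sv r + δ ≤ E.sv l) :
    δ ^ 2 * ((1 - projr D.U r) * projr E.U r).trace ≤
      (1 - projr D.U r) *ᵥ y ⬝ᵥ (1 - projr D.U r) *ᵥ y := by
  set Q := 1 - projr D.U r
  have hQ : Qᵀ = Q := by rw [transpose_sub, transpose_one, projr_transpose]
  have hyu : ∀ l, y ⬝ᵥ E.U.col l = E.sv l * matCol E.V l j := fun l => by
    rw [← E.transpose_mul_U_apply j l, mul_apply]
    simp [dotProduct, hy]
  have hcol : ∀ l : Fin p,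
      δ ^ 2 * ((if (l : ℕ) < r then 1 else 0) * (Q *ᵥ E.U.col l ⬝ᵥ Q *ᵥ E.U.col l))
        ≤ (Q *ᵥ y ⬝ᵥ Q *ᵥ y) * matCol E.V l j ^ 2 := fun l => by
    split_ifs with hl
    · rw [one_mul]
      exact D.sq_mul_dotProduct_le (hB ▸ E.mul_transpose_mulVec_col l) (hyu l) hδ (hσ l hl)
    · rw [zero_mul, mul_zero]
      exact mul_nonneg (dotProduct_self_nonneg _) (sq_nonneg _)
  calc δ ^ 2 * (Q * projr E.U r).trace
      ≤ ∑ l : Fin p, (Q *ᵥ y ⬝ᵥ Q *ᵥ y) * matCol E.V l j ^ 2 := by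
        rw [trace_mul_projr hQ (isIdempotentElem_projr D.hU r).one_sub, Finset.mul_sum]
        exact Finset.sum_le_sum fun l _ => hcol l
    _ ≤ Q *ᵥ y ⬝ᵥ Q *ᵥ y := by
        rw [← Finset.mul_sum]
        exact mul_le_of_le_one_right (dotProduct_self_nonneg _)
          (sum_sq_matCol_le_one E.hV p j)

end SVDData

theorem leave_one_out_wedin_general
    (p n : ℕ) (Yhat : Matrix (Fin p) (Fin (n + 1)) ℝ)
    (Y : Matrix (Fin p) (Fin n) ℝ) (y : Fin p → ℝ)
    (hY : ∀ i j, Y i j = Yhat i (Fin.castSucc j))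
    (hy : ∀ i, y i = Yhat i (Fin.last n))
    (r : ℕ)
    (D : SVDData p n Y) (Dh : SVDData p (n + 1) Yhat)
    (hgap : 2 * vnorm (y - (projr D.U r).mulVec y) < D.sv (r - 1) - D.sv r) :
    fnorm (projr Dh.U r - projr D.U r) ≤
      2 * vnorm (y - (projr D.U r).mulVec y) / (D.sv (r - 1) - D.sv r) := by
  set δ := D.sv (r - 1) - D.sv r
  set w := (1 - projr D.U r) *ᵥ y
  have hw : y - projr D.U r *ᵥ y = w := by simp only [w, sub_mulVec, one_mulVec]
  have hww : 0 ≤ w ⬝ᵥ w := dotProduct_self_nonneg w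
  have hvnorm : vnorm w = √(w ⬝ᵥ w) := by simp [vnorm, dotProduct, sq]
  rw [hw, hvnorm] at hgap ⊢
  have hδ : 0 < δ := lt_of_le_of_lt (by positivity) hgap
  have hgram := mul_transpose_eq_add_vecMulVec hY hy
  have hσ : ∀ l : Fin p, (l : ℕ) < r → D.sv r + δ ≤ Dh.sv l := fun l hl => by
    have := D.sv_le_of_dotProduct_le Dh
      (fun x => hgram ▸ dotProduct_mulVec_le_add_vecMulVec _ y x) (r - 1)
    linarith [Dh.sv_anti l (r - 1) (by omega)]
  have hsin := D.sq_mul_trace_one_sub_projr_mul_le Dh hgram hy hδ hσ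
  have hF := sum_sq_sub_eq_two_trace (projr_transpose D.U r) (projr_transpose Dh.U r)
    (isIdempotentElem_projr D.hU r) (isIdempotentElem_projr Dh.hU r)
    (by rw [trace_projr D.hU, trace_projr Dh.hU])
  rw [fnorm, hF, Real.sqrt_le_left (by positivity), div_pow, mul_pow, Real.sq_sqrt hww,
    le_div_iff₀ (by positivity)]
  nlinarith

/-- **Wedin's bound for the leave-one-out setting.**
If `σ_r − σ_{r+1} > 2‖(I − U_r U_rᵀ) y‖`, then for any choice of leading-`r`
orthonormal left singular vectors `Û_r` of `Ŷ`,
`‖Û_r Û_rᵀ − U_r U_rᵀ‖_F ≤ 2‖(I − U_r U_rᵀ) y‖/(σ_r − σ_{r+1})`. -/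
theorem leave_one_out_wedin
    (p n : ℕ) (Yhat : Matrix (Fin p) (Fin (n + 1)) ℝ)
    (Y : Matrix (Fin p) (Fin n) ℝ) (y : Fin p → ℝ)
    (hY : ∀ i j, Y i j = Yhat i (Fin.castSucc j))
    (hy : ∀ i, y i = Yhat i (Fin.last n))
    (r : ℕ) (hr0 : 0 < r) (hr : r ≤ min p n)
    (D : SVDData p n Y) (Dh : SVDData p (n + 1) Yhat)
    (hgap : 2 * vnorm (y - (projr D.U r).mulVec y) < D.sv (r - 1) - D.sv r) :
    fnorm (projr Dh.U r - projr D.U r) ≤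
      2 * vnorm (y - (projr D.U r).mulVec y) / (D.sv (r - 1) - D.sv r) :=
  leave_one_out_wedin_general p n Yhat Y y hY hy r D Dh hgap
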